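/- arXiv:1709.05674 — 3 statements merged into one kernel-verified Lean document; each statement's English description precedes it below -/
import Mathlib

section
/- Fix an integer k with 1 ≤ k ≤ n−1. The family of polynomials m_I^{(l)} ∈ A, indexed by all strictly increasing k-tuples I = (i_1 < … < i_k) with entries in {1,…,n} and all integers l ≥ 0, is linearly independent over K. -/
namespace SemiInf

/-- The minor `m_I(s)`: the determinant of the `k × k` matrix of power series whose
`(a,b)` entry is `z_{a, I b}`, on rows `0, …, k-1` and columns `I 0, …, I (k-1)`. -/
noncomputable def minor {R : Type*} [CommRing R] {n : ℕ} (z : ℕ → Fin n → PowerSeries R)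
    (k : ℕ) (I : Fin k → Fin n) : PowerSeries R :=
  Matrix.det (Matrix.of fun a b : Fin k => z (a : ℕ) (I b))

/-- The polynomial ring `A = K[z_{i,j}^{(l)} : 0 ≤ i,j < n, l ≥ 0]`. -/
abbrev MinorAlgebra (K : Type*) [CommRing K] (n : ℕ) : Type _ :=
  MvPolynomial (Fin n × Fin n × ℕ) K

/-- The generating series `z_{i,j}(s) = ∑_{l ≥ 0} z_{i,j}^{(l)} s^l ∈ A⟦s⟧`
(extended by zero for row indices `i ≥ n`; only rows `i < n` are ever used). -/
noncomputable def zGen (K : Type*) [CommRing K] (n : ℕ) :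
    ℕ → Fin n → PowerSeries (MinorAlgebra K n) :=
  fun i j =>
    if h : i < n then PowerSeries.mk (fun l => MvPolynomial.X (⟨i, h⟩, j, l)) else 0

end SemiInf

/-!
Expanding the determinant, `m_J^{(l')} = ∑_σ sign σ ∑_{d₁+⋯+d_k = l'} ∏ₐ z_{σ a, J a}^{(d a)}`.
Because the column tuples are strictly increasing, such a monomial determines `J`, `σ` and `d`;
hence the monomial `z_{0, I 0}^{(l)} ∏_{a ≥ 1} z_{a, I a}^{(0)}` occurs in `m_J^{(l')}` with
coefficient `1` if `(J, l') = (I, l)` and `0` otherwise. Taking these coefficients gives linear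
functionals biorthogonal to the family.
-/

open Finset MvPolynomial

theorem linearIndependent_of_biorthogonal {R M ι : Type*} [Ring R] [AddCommGroup M]
    [Module R M] {v : ι → M} (f : ι → Module.Dual R M) (h_same : ∀ i, f i (v i) = 1)
    (h_ne : Pairwise fun i j => f i (v j) = 0) : LinearIndependent R v := by
  rw [linearIndependent_iff]
  intro c hc
  ext i
  have := congrArg (f i) hc
  rw [Finsupp.linearCombination_apply, map_finsuppSum, Finsupp.sum_eq_single i] at this
  · simpa [h_same] using this
  · intro j _ hji
    simp [h_ne hji.symm]
  · simp

theorem Finsupp.exists_eq_of_sum_single_one_eq {α β γ : Type*} {s : Finset α} {t : Finset β}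
    {F : α → γ} {G : β → γ}
    (h : ∑ a ∈ s, Finsupp.single (F a) 1 = ∑ b ∈ t, Finsupp.single (G b) (1 : ℕ))
    {b : β} (hb : b ∈ t) : ∃ a ∈ s, F a = G b := by
  have hpos : (∑ b' ∈ t, Finsupp.single (G b') (1 : ℕ)) (G b) ≠ 0 := by
    rw [Finsupp.finsetSum_apply]
    refine Nat.pos_iff_ne_zero.mp (lt_of_lt_of_le ?_ (Finset.single_le_sum (by simp) hb))
    simp
  rw [← h, Finsupp.finsetSum_apply] at hpos
  obtain ⟨a, ha, hne⟩ := Finset.exists_ne_zero_of_sum_ne_zero hpos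
  exact ⟨a, ha, (Finsupp.single_apply_ne_zero.mp hne).1.symm⟩

namespace SemiInf

section Exponents

variable {n k : ℕ} (hkn : k ≤ n)

/-- The exponent of the monomial `∏ₐ z_{σ a, J a}^{(d a)}`. -/
noncomputable def permExponent (J : Fin k → Fin n) (σ : Equiv.Perm (Fin k)) (d : Fin k →₀ ℕ) :
    Fin n × Fin n × ℕ →₀ ℕ :=
  ∑ a, Finsupp.single (Fin.castLE hkn (σ a), J a, d a) 1

theorem eq_of_permExponent_eq {I J : Fin k → Fin n} (hI : StrictMono I) (hJ : StrictMono J)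
    {σ τ : Equiv.Perm (Fin k)} {d e : Fin k →₀ ℕ}
    (h : permExponent hkn J σ d = permExponent hkn I τ e) : J = I ∧ σ = τ ∧ d = e := by
  have hmatch : ∀ b, I ((τ⁻¹ * σ) b) = J b ∧ e ((τ⁻¹ * σ) b) = d b := by
    intro b
    obtain ⟨c, -, hc⟩ := Finsupp.exists_eq_of_sum_single_one_eq h.symm (mem_univ b)
    simp only [Prod.mk.injEq] at hc
    obtain rfl : c = (τ⁻¹ * σ) b := by
      rw [Equiv.Perm.mul_apply, Equiv.Perm.eq_inv_iff_eq]; exact Fin.castLE_injective hkn hc.1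
    exact hc.2
  have hJI : J = I := by
    have hJ_eq : J = I ∘ (τ⁻¹ * σ) := funext fun b => (hmatch b).1.symm
    exact (hJ.range_inj hI).1 (by rw [hJ_eq, EquivLike.range_comp])
  subst hJI
  have hπ : τ⁻¹ * σ = 1 := Equiv.ext fun b => hJ.injective (hmatch b).1
  refine ⟨rfl, (inv_mul_eq_one.mp hπ).symm, Finsupp.ext fun b => ?_⟩
  simpa [hπ] using (hmatch b).2.symm

theorem coeff_zGen_castLE (K : Type*) [CommRing K] (a : Fin k) (j : Fin n) (m : ℕ) :
    PowerSeries.coeff m (zGen K n (a : ℕ) j) = X (Fin.castLE hkn a, j, m) := by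
  rw [zGen, dif_pos (a.isLt.trans_le hkn), PowerSeries.coeff_mk]
  rfl

theorem coeff_minor_zGen (K : Type*) [CommRing K] (J : Fin k → Fin n) (l : ℕ) :
    PowerSeries.coeff l (minor (zGen K n) k J) =
      ∑ σ : Equiv.Perm (Fin k), ∑ d ∈ finsuppAntidiag univ l,
        Equiv.Perm.sign σ • monomial (permExponent hkn J σ d) (1 : K) := by
  classical
  rw [minor, Matrix.det_apply, map_sum]
  refine sum_congr rfl fun σ _ => ?_
  rw [Units.smul_def, map_zsmul, PowerSeries.coeff_prod, Finset.smul_sum]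
  refine sum_congr rfl fun d _ => ?_
  simp only [Matrix.of_apply, coeff_zGen_castLE hkn, permExponent, monomial_sum_one]
  rfl

theorem coeff_permExponent_coeff_minor_zGen (K : Type*) [CommRing K] {I J : Fin k → Fin n}
    (hI : StrictMono I) (hJ : StrictMono J) (a₀ : Fin k) (l l' : ℕ) :
    coeff (permExponent hkn I 1 (Finsupp.single a₀ l))
        (PowerSeries.coeff l' (minor (zGen K n) k J)) =
      if J = I ∧ l = l' then 1 else 0 := by
  classical
  have hexp : ∀ σ d, permExponent hkn J σ d = permExponent hkn I 1 (Finsupp.single a₀ l) ↔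
      J = I ∧ σ = 1 ∧ d = Finsupp.single a₀ l := fun σ d =>
    ⟨eq_of_permExponent_eq hkn hI hJ, by rintro ⟨rfl, rfl, rfl⟩; rfl⟩
  simp only [coeff_minor_zGen hkn, coeff_sum, coeff_smul, coeff_monomial, hexp]
  by_cases hJI : J = I <;> simp [hJI, ite_and]

end Exponents

theorem minor_coefficients_linearIndependent_general
    (K : Type*) [Field K] (n : ℕ)
    (k : ℕ) (hk1 : 1 ≤ k) (hk2 : k ≤ n - 1) :
    LinearIndependent K
      (fun p : {I : Fin k → Fin n // StrictMono I} × ℕ =>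
        PowerSeries.coeff p.2 (minor (zGen K n) k p.1.1)) := by
  have hkn : k ≤ n := hk2.trans (Nat.sub_le n 1)
  have hcoeff := fun (p q : {I : Fin k → Fin n // StrictMono I} × ℕ) =>
    coeff_permExponent_coeff_minor_zGen hkn K p.1.2 q.1.2 ⟨0, hk1⟩ p.2 q.2
  refine linearIndependent_of_biorthogonal
    (fun p => lcoeff K (permExponent hkn p.1.1 1 (Finsupp.single ⟨0, hk1⟩ p.2)))
    (fun p => by simp [hcoeff]) (fun p q hpq => ?_)
  simp only [lcoeff_apply, hcoeff, ite_eq_right_iff, one_ne_zero, imp_false, not_and]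
  exact fun hI hl => hpq (Prod.ext (Subtype.ext hI.symm) hl)

/-- **Linear independence of the coefficients of minors** (part of Proposition
`fundamentalasminors`): for a fixed `1 ≤ k ≤ n - 1`, the elements `m_I^{(l)} ∈ A`
(coefficient of `s^l` in the minor `m_I(s)` on the first `k` rows and columns indexed
by the strictly increasing `k`-tuple `I`), for all such `I` and all `l ≥ 0`, are
linearly independent over `K`. -/
theorem minor_coefficients_linearIndependent
    (K : Type*) [Field K] [IsAlgClosed K] [CharZero K] (n : ℕ) (hn : 2 ≤ n)
    (k : ℕ) (hk1 : 1 ≤ k) (hk2 : k ≤ n - 1) :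
    LinearIndependent K
      (fun p : {I : Fin k → Fin n // StrictMono I} × ℕ =>
        PowerSeries.coeff p.2 (minor (zGen K n) k p.1.1)) :=
  minor_coefficients_linearIndependent_general K n k hk1 hk2

end SemiInf
end

section
/- Fix k_1, k_2 ∈ {1,…,n−1} and scalars c_{I,J} ∈ K, indexed by pairs of strictly increasing tuples I of length k_1 and J of length k_2 with entries in {1,…,n}. If the relation ∑_{I,J} c_{I,J} · m_I^{(0)} · m_J^{(0)} = 0 holds in A, then the relation ∑_{I,J} c_{I,J} · m_I(s) · m_J(s) = 0 holds in A⟦s⟧ (equivalently, ∑_{I,J} c_{I,J} ∑_{a+b=N} m_I^{(a)} m_J^{(b)} = 0 in A for every N ≥ 0). -/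
/-! The substitution `z_{i,j}^{(l)} ↦ z_{i,j}(s)` is a `K`-algebra map `A → A⟦s⟧` sending each
constant term `z_{i,j}^{(0)}` back to `z_{i,j}(s)`. Being a ring map, it then sends each `m_I^{(0)}`
to `m_I(s)`, so it carries the constant relation to the relation among the series. -/

namespace SemiInf

noncomputable instance {k n : ℕ} : Fintype {I : Fin k → Fin n // StrictMono I} :=
  Fintype.ofInjective (fun I => (I.1 : Fin k → Fin n)) Subtype.val_injective

theorem map_minor_eq_self {R : Type*} [CommRing R] {n : ℕ} (z : ℕ → Fin n → PowerSeries R)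
    (φ : PowerSeries R →+* PowerSeries R) (hφ : ∀ i j, φ (z i j) = z i j)
    (k : ℕ) (I : Fin k → Fin n) : φ (minor z k I) = minor z k I := by
  rw [minor, RingHom.map_det]
  exact congrArg Matrix.det (Matrix.ext fun _ _ => hφ _ _)

noncomputable def substGen (K : Type*) [CommRing K] (n : ℕ) :
    MinorAlgebra K n →ₐ[K] PowerSeries (MinorAlgebra K n) :=
  MvPolynomial.aeval fun p => zGen K n p.1 p.2.1

theorem substGen_constantCoeff_zGen (K : Type*) [CommRing K] (n : ℕ) (i : ℕ) (j : Fin n) :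
    substGen K n (PowerSeries.constantCoeff (zGen K n i j)) = zGen K n i j := by
  by_cases hi : i < n <;> simp [zGen, substGen, hi]

theorem constant_relation_propagates_general
    (K : Type*) [Field K] (n : ℕ)
    (k₁ k₂ : ℕ)
    (c : {I : Fin k₁ → Fin n // StrictMono I} → {J : Fin k₂ → Fin n // StrictMono J} → K)
    (h0 : ∑ I : {I : Fin k₁ → Fin n // StrictMono I},
            ∑ J : {J : Fin k₂ → Fin n // StrictMono J},
              c I J •
                (PowerSeries.coeff (R := MinorAlgebra K n) 0 (minor (zGen K n) k₁ I.1) *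
                  PowerSeries.coeff (R := MinorAlgebra K n) 0 (minor (zGen K n) k₂ J.1)) = 0) :
    ∑ I : {I : Fin k₁ → Fin n // StrictMono I},
      ∑ J : {J : Fin k₂ → Fin n // StrictMono J},
        c I J • (minor (zGen K n) k₁ I.1 * minor (zGen K n) k₂ J.1) = 0 := by
  have lift_minor (k : ℕ) (I : Fin k → Fin n) :
      substGen K n (PowerSeries.coeff 0 (minor (zGen K n) k I)) = minor (zGen K n) k I := by
    rw [PowerSeries.coeff_zero_eq_constantCoeff_apply]
    exact map_minor_eq_self (zGen K n) ((substGen K n).toRingHom.comp PowerSeries.constantCoeff)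
      (substGen_constantCoeff_zGen K n) k I
  simpa only [map_sum, map_smul, map_mul, lift_minor, map_zero] using
    congrArg (substGen K n) h0

/-- **Classical Plücker-type relations propagate to generating series** (Proposition
`classicaltosemiinfrelations`): if a quadratic relation
`∑_{I,J} c_{I,J} m_I^{(0)} m_J^{(0)} = 0` holds among the constant terms of the minors,
then `∑_{I,J} c_{I,J} m_I(s) m_J(s) = 0` holds in `A⟦s⟧`. -/
theorem constant_relation_propagates
    (K : Type*) [Field K] [IsAlgClosed K] [CharZero K] (n : ℕ) (hn : 2 ≤ n)
    (k₁ k₂ : ℕ) (hk₁ : 1 ≤ k₁) (hk₁' : k₁ ≤ n - 1) (hk₂ : 1 ≤ k₂) (hk₂' : k₂ ≤ n - 1)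
    (c : {I : Fin k₁ → Fin n // StrictMono I} → {J : Fin k₂ → Fin n // StrictMono J} → K)
    (h0 : ∑ I : {I : Fin k₁ → Fin n // StrictMono I},
            ∑ J : {J : Fin k₂ → Fin n // StrictMono J},
              c I J •
                (PowerSeries.coeff (R := MinorAlgebra K n) 0 (minor (zGen K n) k₁ I.1) *
                  PowerSeries.coeff (R := MinorAlgebra K n) 0 (minor (zGen K n) k₂ J.1)) = 0) :
    ∑ I : {I : Fin k₁ → Fin n // StrictMono I},
      ∑ J : {J : Fin k₂ → Fin n // StrictMono J},
        c I J • (minor (zGen K n) k₁ I.1 * minor (zGen K n) k₂ J.1) = 0 :=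
  constant_relation_propagates_general K n k₁ k₂ c h0

end SemiInf
end

section
/- Fix integers 1 ≤ k < N. Let B_k be the collection of finite sets B of pairs (p,q) of integers such that every (p,q) ∈ B satisfies 1 ≤ p ≤ k < q ≤ N, and such that for any two distinct pairs (p_1,q_1), (p_2,q_2) ∈ B one has p_1 ≠ p_2, q_1 ≠ q_2, and p_1 < p_2 if and only if q_1 > q_2. Then the map sending B to the set ({1,…,k} ∖ {p : (p,q) ∈ B}) ∪ {q : (p,q) ∈ B} is a bijection from B_k onto the collection of all k-element subsets of {1,…,N}. -/
/-!
A set `B` of pairs satisfying the conditions is the graph of an order-reversing bijection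
between its projections `P ⊆ {1,…,k}` and `Q ⊆ {k+1,…,N}`. Such a bijection is unique, since
`p ∈ P` has as many smaller elements in `P` as its partner has larger elements in `Q`, and it
exists whenever `#P = #Q` (match the `i`-th smallest element of `P` with the `i`-th largest of
`Q`). So `B ↦ (P, Q)` is a bijection onto the pairs of equinumerous sets, and
`(P, Q) ↦ ({1,…,k} \ P) ∪ Q` is a bijection from these onto the `k`-subsets of `{1,…,N}`,
with inverse `S ↦ ({1,…,k} \ S, S \ {1,…,k})`.
-/

open Finset

def IsAntitoneMatching {α β : Type*} [LT α] [LT β] (B : Finset (α × β)) : Prop :=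
  ∀ pq ∈ B, ∀ pq' ∈ B, pq ≠ pq' →
    pq.1 ≠ pq'.1 ∧ pq.2 ≠ pq'.2 ∧ (pq.1 < pq'.1 ↔ pq'.2 < pq.2)

theorem strictAntiOn_card_filter_lt {α : Type*} [Preorder α] [DecidableLT α] (s : Finset α) :
    StrictAntiOn (fun a => #(s.filter (a < ·))) s := by
  intro a _ b hb hab
  refine card_lt_card ⟨fun x hx => ?_, fun h => ?_⟩
  · simp only [mem_filter] at hx ⊢
    exact ⟨hx.1, hab.trans hx.2⟩
  · simpa using h (mem_filter.2 ⟨hb, hab⟩)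

section LinearOrder

variable {α β : Type*} [LinearOrder α] [LinearOrder β]

namespace IsAntitoneMatching

variable {B B' : Finset (α × β)}

theorem injOn_fst (hB : IsAntitoneMatching B) : Set.InjOn Prod.fst (B : Set (α × β)) :=
  fun _ hr _ hr' h => by_contra fun hne => (hB _ hr _ hr' hne).1 h

theorem injOn_snd (hB : IsAntitoneMatching B) : Set.InjOn Prod.snd (B : Set (α × β)) :=
  fun _ hr _ hr' h => by_contra fun hne => (hB _ hr _ hr' hne).2.1 h

theorem card_image_fst (hB : IsAntitoneMatching B) : #(B.image Prod.fst) = #B :=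
  card_image_of_injOn hB.injOn_fst

theorem card_image_snd (hB : IsAntitoneMatching B) : #(B.image Prod.snd) = #B :=
  card_image_of_injOn hB.injOn_snd

theorem card_filter_lt_eq_card_filter_gt (hB : IsAntitoneMatching B) {p : α} {q : β}
    (hpq : (p, q) ∈ B) :
    #((B.image Prod.fst).filter (· < p)) = #((B.image Prod.snd).filter (q < ·)) := by
  rw [filter_image, filter_image,
    card_image_of_injOn (hB.injOn_fst.mono (coe_subset.2 (filter_subset _ _))),
    card_image_of_injOn (hB.injOn_snd.mono (coe_subset.2 (filter_subset _ _)))]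
  congr 1
  refine filter_congr fun r hr => ?_
  rcases eq_or_ne r (p, q) with rfl | hne
  · simp
  · exact (hB r hr _ hpq hne).2.2

theorem subset_of_image_eq (hB : IsAntitoneMatching B) (hB' : IsAntitoneMatching B')
    (hfst : B.image Prod.fst = B'.image Prod.fst) (hsnd : B.image Prod.snd = B'.image Prod.snd) :
    B ⊆ B' := by
  rintro ⟨p, q⟩ hpq
  obtain ⟨⟨p', q'⟩, hpq', rfl⟩ := mem_image.1 (hfst ▸ mem_image_of_mem Prod.fst hpq)
  have hq : q = q' := by
    refine (strictAntiOn_card_filter_lt _).injOn (mem_image_of_mem Prod.snd hpq)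
      (hsnd ▸ mem_image_of_mem Prod.snd hpq') ?_
    simp only
    rw [← hB.card_filter_lt_eq_card_filter_gt hpq, hsnd,
      ← hB'.card_filter_lt_eq_card_filter_gt hpq', hfst]
  rwa [hq]

end IsAntitoneMatching

theorem exists_isAntitoneMatching {P : Finset α} {Q : Finset β} (h : #P = #Q) :
    ∃ B : Finset (α × β),
      IsAntitoneMatching B ∧ B.image Prod.fst = P ∧ B.image Prod.snd = Q := by
  let f : Fin #P → α × β := fun i => (P.orderEmbOfFin rfl i, Q.orderEmbOfFin h.symm i.rev)
  refine ⟨univ.image f, ?_, ?_, ?_⟩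
  · simp only [IsAntitoneMatching, mem_image, mem_univ, true_and]
    rintro _ ⟨i, rfl⟩ _ ⟨j, rfl⟩ hij
    have hij : i ≠ j := fun h => hij (h ▸ rfl)
    simp [f, hij, Fin.rev_lt_rev]
  · rw [image_image]
    exact image_orderEmbOfFin_univ P rfl
  · conv_rhs =>
      rw [← image_orderEmbOfFin_univ Q h.symm, ← image_univ_equiv Fin.revPerm, image_image]
    rw [image_image]
    rfl

theorem bijOn_image_fst_image_snd :
    Set.BijOn (fun B : Finset (α × β) => (B.image Prod.fst, B.image Prod.snd))
      {B | IsAntitoneMatching B} {PQ | #PQ.1 = #PQ.2} :=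
  ⟨fun _ hB => hB.card_image_fst.trans hB.card_image_snd.symm,
    fun _ hB _ hB' h =>
      (hB.subset_of_image_eq hB' (congrArg Prod.fst h) (congrArg Prod.snd h)).antisymm
        (hB'.subset_of_image_eq hB (congrArg Prod.fst h).symm (congrArg Prod.snd h).symm),
    fun _ hPQ =>
      let ⟨B, hB, hfst, hsnd⟩ := exists_isAntitoneMatching hPQ
      ⟨B, hB, Prod.ext hfst hsnd⟩⟩

end LinearOrder

section SdiffUnion

variable {γ : Type*} [DecidableEq γ] {I J : Finset γ}

theorem bijOn_sdiff_union (hIJ : Disjoint I J) :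
    Set.BijOn (fun PQ : Finset γ × Finset γ => (I \ PQ.1) ∪ PQ.2)
      {PQ | #PQ.1 = #PQ.2 ∧ PQ.1 ⊆ I ∧ PQ.2 ⊆ J} {S | S ⊆ I ∪ J ∧ #S = #I} := by
  have recover {P Q : Finset γ} (hP : P ⊆ I) (hQ : Q ⊆ J) :
      I \ ((I \ P) ∪ Q) = P ∧ ((I \ P) ∪ Q) \ I = Q := by
    constructor <;> ext x <;> grind [disjoint_left]
  refine ⟨?_, ?_, ?_⟩
  · rintro ⟨P, Q⟩ ⟨hcard : #P = #Q, hP : P ⊆ I, hQ : Q ⊆ J⟩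
    refine ⟨union_subset_union sdiff_subset hQ, ?_⟩
    change #((I \ P) ∪ Q) = #I
    rw [card_union_of_disjoint (disjoint_of_subset_left sdiff_subset (hIJ.mono_right hQ)),
      card_sdiff_of_subset hP]
    have := card_le_card hP
    omega
  · rintro ⟨P, Q⟩ ⟨-, hP : P ⊆ I, hQ : Q ⊆ J⟩
      ⟨P', Q'⟩ ⟨-, hP' : P' ⊆ I, hQ' : Q' ⊆ J⟩ h
    obtain ⟨hP₁, hQ₁⟩ := recover hP hQ
    obtain ⟨hP₂, hQ₂⟩ := recover hP' hQ'
    simp only at h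
    rw [h] at hP₁ hQ₁
    exact Prod.ext (hP₁.symm.trans hP₂) (hQ₁.symm.trans hQ₂)
  · rintro S ⟨hS, hcard⟩
    refine ⟨(I \ S, S \ I), ⟨card_sdiff_comm hcard.symm, sdiff_subset, ?_⟩, ?_⟩
    · exact sdiff_le_iff.2 hS
    · change I \ (I \ S) ∪ S \ I = S
      rw [sdiff_sdiff_right_self, inf_comm]
      exact sup_inf_sdiff S I

end SdiffUnion

theorem fundamental_filling_bijection_general (k N : ℕ) (hkN : k < N) :
    Set.BijOn
      (fun B : Finset (ℕ × ℕ) =>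
        (Finset.Icc 1 k \ B.image Prod.fst) ∪ B.image Prod.snd)
      {B : Finset (ℕ × ℕ) |
        (∀ pq ∈ B, 1 ≤ pq.1 ∧ pq.1 ≤ k ∧ k < pq.2 ∧ pq.2 ≤ N) ∧
        ∀ pq ∈ B, ∀ pq' ∈ B, pq ≠ pq' →
          pq.1 ≠ pq'.1 ∧ pq.2 ≠ pq'.2 ∧ (pq.1 < pq'.1 ↔ pq'.2 < pq.2)}
      {S : Finset ℕ | S ⊆ Finset.Icc 1 N ∧ S.card = k} := by
  have hdisj : Disjoint (Icc 1 k) (Ioc k N) :=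
    disjoint_left.2 fun x hx hx' => by simp only [mem_Icc, mem_Ioc] at hx hx'; omega
  have hunion : Icc 1 k ∪ Ioc k N = Icc 1 N := by
    ext; simp only [mem_union, mem_Icc, mem_Ioc]; omega
  have hbounds : Set.MapsTo (fun B : Finset (ℕ × ℕ) => (B.image Prod.fst, B.image Prod.snd))
      {B | B.image Prod.fst ⊆ Icc 1 k ∧ B.image Prod.snd ⊆ Ioc k N}
      {PQ | PQ.1 ⊆ Icc 1 k ∧ PQ.2 ⊆ Ioc k N} := fun _ h => h
  convert (bijOn_sdiff_union hdisj).comp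
    (bijOn_image_fst_image_snd.inter_mapsTo hbounds fun _ h => h.2) using 1
  · rfl
  · ext B
    simp only [Set.mem_inter_iff, Set.mem_ofPred, IsAntitoneMatching, image_subset_iff, mem_Icc,
      mem_Ioc, ← forall₂_and]
    exact forall₂_congr fun _ _ => and_comm.trans (and_congr_right' and_assoc.symm)
  · rw [hunion, Nat.card_Icc, add_tsub_cancel_right]

/-- **Combinatorial bijection for fundamental representations** (Lemma
`oneplacefilling`): for `1 ≤ k < N`, the map `B ↦ ({1,…,k} \ {p : (p,q) ∈ B}) ∪
{q : (p,q) ∈ B}` is a bijection from the collection of finite sets `B` of pairs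
`(p,q)` with `1 ≤ p ≤ k < q ≤ N` such that distinct pairs of `B` have distinct first
entries, distinct second entries, and `p₁ < p₂ ↔ q₁ > q₂`, onto the collection of all
`k`-element subsets of `{1,…,N}`. -/
theorem fundamental_filling_bijection (k N : ℕ) (hk : 1 ≤ k) (hkN : k < N) :
    Set.BijOn
      (fun B : Finset (ℕ × ℕ) =>
        (Finset.Icc 1 k \ B.image Prod.fst) ∪ B.image Prod.snd)
      {B : Finset (ℕ × ℕ) |
        (∀ pq ∈ B, 1 ≤ pq.1 ∧ pq.1 ≤ k ∧ k < pq.2 ∧ pq.2 ≤ N) ∧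
        ∀ pq ∈ B, ∀ pq' ∈ B, pq ≠ pq' →
          pq.1 ≠ pq'.1 ∧ pq.2 ≠ pq'.2 ∧ (pq.1 < pq'.1 ↔ pq'.2 < pq.2)}
      {S : Finset ℕ | S ⊆ Finset.Icc 1 N ∧ S.card = k} :=
  fundamental_filling_bijection_general k N hkN
end
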